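/- arXiv:2411.04856 — 4 statements merged into one kernel-verified Lean document; each statement's English description precedes it below -/
import Mathlib

section
/- Let V be a finite-dimensional real vector space with a Born structure (g, h, ω, A, B, J), and let L₊ = ker(A − Id) and L₋ = ker(A + Id) be the ±1-eigenspaces of A. Then V = L₊ ⊕ L₋; ω(X,Y) = 0 and g(X,Y) = 0 whenever X and Y both lie in L₊ or both lie in L₋; h(X,Y) = 0 whenever X ∈ L₊ and Y ∈ L₋; J maps L₊ bijectively onto L₋ and L₋ bijectively onto L₊; and dim L₊ = dim L₋ = (dim V)/2. -/
/-!
Nondegeneracy of `ω` forces `J = -A ∘ B`, so `J² = -1` together with `A² = B² = 1` makes `J`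
anticommute with `A`; hence `J` swaps the `±1`-eigenspaces of `A` and they have equal dimension.
On a common eigenspace of `A`, `ω(X, Y) = ± g(X, Y)` is both skew and symmetric, hence zero, and
then `h(X, Y) = -ω(JX, Y)` vanishes for `X ∈ L₊`, `Y ∈ L₋` because `JX ∈ L₋`.
-/

section Eigenspaces

variable {R V : Type*} [CommRing R] [AddCommGroup V] [Module R V] {A : V →ₗ[R] V} {X : V}

theorem mem_ker_sub_id : X ∈ LinearMap.ker (A - LinearMap.id) ↔ A X = X := by
  rw [LinearMap.mem_ker, LinearMap.sub_apply, LinearMap.id_apply, sub_eq_zero]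

theorem mem_ker_add_id : X ∈ LinearMap.ker (A + LinearMap.id) ↔ A X = -X := by
  rw [LinearMap.mem_ker, LinearMap.add_apply, LinearMap.id_apply, add_eq_zero_iff_eq_neg]

end Eigenspaces

section Involution

variable {K V : Type*} [Field K] [NeZero (2 : K)] [AddCommGroup V] [Module K V]

theorem isCompl_ker_sub_id_ker_add_id {A : V →ₗ[K] V} (hA : ∀ X, A (A X) = X) :
    IsCompl (LinearMap.ker (A - LinearMap.id)) (LinearMap.ker (A + LinearMap.id)) := by
  refine ⟨Submodule.disjoint_def.2 fun X hp hm => ?_,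
    codisjoint_iff.2 <| eq_top_iff.2 fun X _ => Submodule.mem_sup.2 ?_⟩
  · rw [mem_ker_sub_id] at hp
    rw [mem_ker_add_id] at hm
    have h2X : (2 : K) • X = 0 := by linear_combination (norm := module) hm - hp
    exact (smul_eq_zero.1 h2X).resolve_left two_ne_zero
  · refine ⟨(2⁻¹ : K) • (X + A X), ?_, (2⁻¹ : K) • (X - A X), ?_, ?_⟩
    · rw [mem_ker_sub_id, map_smul, map_add, hA, add_comm]
    · rw [mem_ker_add_id, map_smul, map_sub, hA, ← smul_neg, neg_sub]
    · rw [← smul_add, add_add_sub_cancel, ← two_smul K, smul_smul, inv_mul_cancel₀ two_ne_zero,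
        one_smul]

end Involution

section Isotropy

variable {K V : Type*} [Field K] [NeZero (2 : K)] [AddCommGroup V] [Module K V]
  {g ω : V →ₗ[K] V →ₗ[K] K} {A : V →ₗ[K] V}

theorem isotropic_of_common_eigenvalue (hg : ∀ X Y, g X Y = g Y X) (hω : ω.IsAlt)
    (hA : ∀ X Y, g (A X) Y = ω X Y) {c : K} (hc : c ≠ 0) {X Y : V}
    (hX : A X = c • X) (hY : A Y = c • Y) : ω X Y = 0 ∧ g X Y = 0 := by
  have hXY : ω X Y = c * g X Y := by rw [← hA, hX, map_smul, LinearMap.smul_apply, smul_eq_mul]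
  have hYX : ω Y X = c * g X Y := by
    rw [← hA, hY, map_smul, LinearMap.smul_apply, smul_eq_mul, hg]
  have hg0 : g X Y = 0 := by
    have : (2 * c) * g X Y = 0 := by linear_combination -hXY - hYX - hω.neg X Y
    exact (mul_eq_zero.1 this).resolve_left (mul_ne_zero two_ne_zero hc)
  exact ⟨by rw [hXY, hg0, mul_zero], hg0⟩

theorem isotropic_ker_sub_id (hg : ∀ X Y, g X Y = g Y X) (hω : ω.IsAlt)
    (hA : ∀ X Y, g (A X) Y = ω X Y) :
    ∀ X ∈ LinearMap.ker (A - LinearMap.id), ∀ Y ∈ LinearMap.ker (A - LinearMap.id),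
      ω X Y = 0 ∧ g X Y = 0 := by
  intro X hX Y hY
  rw [mem_ker_sub_id] at hX hY
  exact isotropic_of_common_eigenvalue hg hω hA (c := 1) one_ne_zero (by rw [hX, one_smul])
    (by rw [hY, one_smul])

theorem isotropic_ker_add_id (hg : ∀ X Y, g X Y = g Y X) (hω : ω.IsAlt)
    (hA : ∀ X Y, g (A X) Y = ω X Y) :
    ∀ X ∈ LinearMap.ker (A + LinearMap.id), ∀ Y ∈ LinearMap.ker (A + LinearMap.id),
      ω X Y = 0 ∧ g X Y = 0 := by
  intro X hX Y hY
  rw [mem_ker_add_id] at hX hY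
  exact isotropic_of_common_eigenvalue hg hω hA (c := -1) (neg_ne_zero.2 one_ne_zero)
    (by rw [hX, neg_one_smul]) (by rw [hY, neg_one_smul])

end Isotropy

theorem mul_eq_neg_mul_of_eq_neg_mul {R : Type*} [Ring R] {a b j : R} (ha : a * a = 1)
    (hb : b * b = 1) (hj : j * j = -1) (hjab : j = -(a * b)) : a * j = -(j * a) := by
  have habab : a * b * (a * b) = -1 := by rwa [hjab, neg_mul_neg] at hj
  have haba : a * b * a = -b :=
    calc a * b * a = a * b * a * (b * b) := by rw [hb, mul_one]
      _ = a * b * (a * b) * b := by noncomm_ring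
      _ = -b := by rw [habab, neg_one_mul]
  rw [hjab, mul_neg, ← mul_assoc, ha, one_mul, neg_mul, neg_neg, haba]

theorem eq_neg_mul_of_born {K V : Type*} [CommRing K] [AddCommGroup V] [Module K V]
    {g h ω : V →ₗ[K] V →ₗ[K] K} {A B J : V →ₗ[K] V} (hω : ω.SeparatingLeft)
    (hA : ∀ X Y, g (A X) Y = ω X Y) (hB : ∀ X Y, g (B X) Y = h X Y)
    (hJ : ∀ X Y, ω (J X) Y = -h X Y) (hA2 : ∀ X, A (A X) = X) : J = -(A * B) := by
  ext X
  refine eq_neg_of_add_eq_zero_left (hω _ fun Y => ?_)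
  rw [map_add, LinearMap.add_apply, hJ, Module.End.mul_apply, ← hA, hA2, hB, neg_add_cancel]

section ComplexStructure

variable {R V : Type*} [CommRing R] [AddCommGroup V] [Module R V] {A J : Module.End R V}

theorem injective_of_mul_self_eq_neg_one (hJ : J * J = -1) : Function.Injective J :=
  Function.LeftInverse.injective (g := ⇑(-J)) fun X => by
    rw [← Module.End.mul_apply, neg_mul, hJ, neg_neg, Module.End.one_apply]

theorem map_eq_of_mul_self_eq_neg_one (hJ : J * J = -1) {P Q : Submodule R V}
    (hPQ : P.map J ≤ Q) (hQP : Q.map J ≤ P) : P.map J = Q := by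
  refine le_antisymm hPQ fun Y hY => ⟨-J Y, P.neg_mem (hQP ⟨Y, hY, rfl⟩), ?_⟩
  rw [map_neg, ← Module.End.mul_apply, hJ, LinearMap.neg_apply, Module.End.one_apply, neg_neg]

theorem map_ker_sub_id_le (hAJ : A * J = -(J * A)) :
    (LinearMap.ker (A - LinearMap.id)).map J ≤ LinearMap.ker (A + LinearMap.id) := by
  rintro _ ⟨X, hX, rfl⟩
  rw [SetLike.mem_coe, mem_ker_sub_id] at hX
  rw [mem_ker_add_id, ← Module.End.mul_apply, hAJ, LinearMap.neg_apply, Module.End.mul_apply, hX]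

theorem map_ker_add_id_le (hAJ : A * J = -(J * A)) :
    (LinearMap.ker (A + LinearMap.id)).map J ≤ LinearMap.ker (A - LinearMap.id) := by
  rintro _ ⟨X, hX, rfl⟩
  rw [SetLike.mem_coe, mem_ker_add_id] at hX
  rw [mem_ker_sub_id, ← Module.End.mul_apply, hAJ, LinearMap.neg_apply, Module.End.mul_apply, hX,
    map_neg, neg_neg]

end ComplexStructure

theorem born_eigenspaces_properties_general
    (V : Type*) [AddCommGroup V] [Module ℝ V] [FiniteDimensional ℝ V]
    (g h ω : V →ₗ[ℝ] V →ₗ[ℝ] ℝ) (A B J : V →ₗ[ℝ] V)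
    (hg_symm : ∀ X Y, g X Y = g Y X)
    (hω_alt : ∀ X, ω X X = 0)
    (hω_nondeg : ∀ X, (∀ Y, ω X Y = 0) → X = 0)
    (hA : ∀ X Y, g (A X) Y = ω X Y)
    (hB : ∀ X Y, g (B X) Y = h X Y)
    (hJ : ∀ X Y, ω (J X) Y = - h X Y)
    (hA2 : ∀ X, A (A X) = X)
    (hB2 : ∀ X, B (B X) = X)
    (hJ2 : ∀ X, J (J X) = -X) :
    IsCompl (LinearMap.ker (A - LinearMap.id)) (LinearMap.ker (A + LinearMap.id)) ∧
    (∀ X ∈ LinearMap.ker (A - LinearMap.id), ∀ Y ∈ LinearMap.ker (A - LinearMap.id),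
      ω X Y = 0 ∧ g X Y = 0) ∧
    (∀ X ∈ LinearMap.ker (A + LinearMap.id), ∀ Y ∈ LinearMap.ker (A + LinearMap.id),
      ω X Y = 0 ∧ g X Y = 0) ∧
    (∀ X ∈ LinearMap.ker (A - LinearMap.id), ∀ Y ∈ LinearMap.ker (A + LinearMap.id),
      h X Y = 0) ∧
    Function.Injective J ∧
    Submodule.map J (LinearMap.ker (A - LinearMap.id)) = LinearMap.ker (A + LinearMap.id) ∧
    Submodule.map J (LinearMap.ker (A + LinearMap.id)) = LinearMap.ker (A - LinearMap.id) ∧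
    Module.finrank ℝ (LinearMap.ker (A - LinearMap.id))
      = Module.finrank ℝ (LinearMap.ker (A + LinearMap.id)) ∧
    2 * Module.finrank ℝ (LinearMap.ker (A - LinearMap.id)) = Module.finrank ℝ V := by
  have hJJ : J * J = -1 := LinearMap.ext hJ2
  have hAJ : A * J = -(J * A) := mul_eq_neg_mul_of_eq_neg_mul (LinearMap.ext hA2)
    (LinearMap.ext hB2) hJJ (eq_neg_mul_of_born hω_nondeg hA hB hJ hA2)
  have hJ_inj := injective_of_mul_self_eq_neg_one hJJ
  have hcompl := isCompl_ker_sub_id_ker_add_id hA2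
  have hplus := map_ker_sub_id_le hAJ
  have hminus := map_ker_add_id_le hAJ
  have hmap_plus := map_eq_of_mul_self_eq_neg_one hJJ hplus hminus
  have hrank : Module.finrank ℝ (LinearMap.ker (A - LinearMap.id))
      = Module.finrank ℝ (LinearMap.ker (A + LinearMap.id)) :=
    (Submodule.equivMapOfInjective J hJ_inj _).finrank_eq.trans (by rw [hmap_plus])
  have hsum := Submodule.finrank_add_eq_of_isCompl hcompl
  refine ⟨hcompl, isotropic_ker_sub_id hg_symm hω_alt hA, isotropic_ker_add_id hg_symm hω_alt hA,
    fun X hX Y hY => ?_, hJ_inj, hmap_plus, map_eq_of_mul_self_eq_neg_one hJJ hminus hplus,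
    hrank, by omega⟩
  rw [← neg_eq_zero, ← hJ]
  exact (isotropic_ker_add_id hg_symm hω_alt hA _ (hplus ⟨X, hX, rfl⟩) Y hY).1

/-- The `±1`-eigenspaces `L₊`, `L₋` of `A` in a Born structure are complementary,
Lagrangian for `ω`, null for `g`, orthogonal for `h`, interchanged bijectively by
`J`, and of dimension `(dim V)/2`. -/
theorem born_eigenspaces_properties
    (V : Type*) [AddCommGroup V] [Module ℝ V] [FiniteDimensional ℝ V]
    (g h ω : V →ₗ[ℝ] V →ₗ[ℝ] ℝ) (A B J : V →ₗ[ℝ] V)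
    (hg_symm : ∀ X Y, g X Y = g Y X)
    (hg_nondeg : ∀ X, (∀ Y, g X Y = 0) → X = 0)
    (hh_symm : ∀ X Y, h X Y = h Y X)
    (hh_nondeg : ∀ X, (∀ Y, h X Y = 0) → X = 0)
    (hω_alt : ∀ X, ω X X = 0)
    (hω_nondeg : ∀ X, (∀ Y, ω X Y = 0) → X = 0)
    (hA : ∀ X Y, g (A X) Y = ω X Y)
    (hB : ∀ X Y, g (B X) Y = h X Y)
    (hJ : ∀ X Y, ω (J X) Y = - h X Y)
    (hA2 : ∀ X, A (A X) = X)
    (hB2 : ∀ X, B (B X) = X)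
    (hJ2 : ∀ X, J (J X) = -X) :
    IsCompl (LinearMap.ker (A - LinearMap.id)) (LinearMap.ker (A + LinearMap.id)) ∧
    (∀ X ∈ LinearMap.ker (A - LinearMap.id), ∀ Y ∈ LinearMap.ker (A - LinearMap.id),
      ω X Y = 0 ∧ g X Y = 0) ∧
    (∀ X ∈ LinearMap.ker (A + LinearMap.id), ∀ Y ∈ LinearMap.ker (A + LinearMap.id),
      ω X Y = 0 ∧ g X Y = 0) ∧
    (∀ X ∈ LinearMap.ker (A - LinearMap.id), ∀ Y ∈ LinearMap.ker (A + LinearMap.id),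
      h X Y = 0) ∧
    Function.Injective J ∧
    Submodule.map J (LinearMap.ker (A - LinearMap.id)) = LinearMap.ker (A + LinearMap.id) ∧
    Submodule.map J (LinearMap.ker (A + LinearMap.id)) = LinearMap.ker (A - LinearMap.id) ∧
    Module.finrank ℝ (LinearMap.ker (A - LinearMap.id))
      = Module.finrank ℝ (LinearMap.ker (A + LinearMap.id)) ∧
    2 * Module.finrank ℝ (LinearMap.ker (A - LinearMap.id)) = Module.finrank ℝ V :=
  born_eigenspaces_properties_general V g h ω A B J hg_symm hω_alt hω_nondeg hA hB hJ hA2 hB2 hJ2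
end

section
/- Let 𝔤 be a finite-dimensional real Lie algebra with a Born structure (g, h, ω, A, B, J), and let ∇ be the Levi-Civita connection of h. Then the Born structure is integrable (ω is closed, the Nijenhuis tensor of J vanishes, and the ±1-eigenspaces of A are Lie subalgebras) if and only if the ±1-eigenspaces of A are Lie subalgebras of 𝔤 and J is parallel, i.e. ∇_X(JY) = J(∇_X Y) for all X, Y ∈ 𝔤. -/
/-!
Since `ω = h (J ·, ·)`, a connection preserving `h` preserves `ω` exactly when it commutes
with `J`. For the Levi-Civita connection the classical identity (Kobayashi–Nomizu IX.4.2)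
`2 h ((∇_X J) Y, Z) = dω(X, JY, JZ) - dω(X, Y, Z) + ω(X, N_J(Y, Z))` shows that `dω = 0` and
`N_J = 0` force `∇J = 0`. Conversely, torsion-freeness expresses `dω` through `∇ω` and `N_J`
through `∇J`, so both vanish when `J` is parallel.
-/

section AlmostHermitian

variable {K V : Type*} [CommRing K] [AddCommGroup V] [Module K V]

structure IsAlmostHermitian (h ω : V →ₗ[K] V →ₗ[K] K) (J : V →ₗ[K] V) : Prop where
  symm : ∀ X Y, h X Y = h Y X
  alt : ω.IsAlt
  fundamental : ∀ X Y, ω (J X) Y = -h X Y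
  sq : ∀ X, J (J X) = -X

namespace IsAlmostHermitian

variable {h ω : V →ₗ[K] V →ₗ[K] K} {J : V →ₗ[K] V} (H : IsAlmostHermitian h ω J)
include H

theorem metric_J_left (X Y : V) : h (J X) Y = ω X Y := by
  simpa [H.sq] using (H.fundamental (J X) Y).symm

theorem form_J_right (X Y : V) : ω X (J Y) = h X Y := by
  rw [← H.alt.neg, H.fundamental, H.symm, neg_neg]

theorem metric_J_right (X Y : V) : h X (J Y) = -ω X Y := by
  rw [H.symm, H.metric_J_left, H.alt.neg]

end IsAlmostHermitian

end AlmostHermitian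

section LieAlgebra

variable {K L : Type*} [Field K] [LieRing L] [LieAlgebra K L]

def nijenhuis (J : L →ₗ[K] L) (X Y : L) : L :=
  ⁅J X, J Y⁆ - J ⁅J X, Y⁆ - J ⁅X, J Y⁆ - ⁅X, Y⁆

/-- Up to sign, the Chevalley–Eilenberg differential `dω (X, Y, Z)`. -/
def cyclicBracketSum (ω : L →ₗ[K] L →ₗ[K] K) (X Y Z : L) : K :=
  ω ⁅X, Y⁆ Z + ω ⁅Y, Z⁆ X + ω ⁅Z, X⁆ Y

def IsLeviCivita (h : L →ₗ[K] L →ₗ[K] K) (D : L →ₗ[K] L →ₗ[K] L) : Prop :=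
  ∀ X Y Z, 2 * h (D X Y) Z = h ⁅X, Y⁆ Z - h Y ⁅X, Z⁆ - h X ⁅Y, Z⁆

variable {h ω : L →ₗ[K] L →ₗ[K] K} {J : L →ₗ[K] L} {D : L →ₗ[K] L →ₗ[K] L}

theorem cyclicBracketSum_eq_zero_of_torsionFree (hω : ω.IsAlt)
    (htor : ∀ X Y, D X Y - D Y X = ⁅X, Y⁆) (hpar : ∀ X Y Z, ω (D X Y) Z + ω Y (D X Z) = 0)
    (X Y Z : L) : cyclicBracketSum ω X Y Z = 0 := by
  simp only [cyclicBracketSum, ← htor, map_sub, LinearMap.sub_apply]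
  linear_combination hpar X Y Z + hpar Y Z X + hpar Z X Y + hω.neg Y (D X Z)
    + hω.neg Z (D Y X) + hω.neg X (D Z Y)

theorem nijenhuis_eq_zero_of_torsionFree (hJ : ∀ X, J (J X) = -X)
    (htor : ∀ X Y, D X Y - D Y X = ⁅X, Y⁆) (hpar : ∀ X Y, D X (J Y) = J (D X Y)) (X Y : L) :
    nijenhuis J X Y = 0 := by
  simp only [nijenhuis, ← htor, hpar, map_sub, hJ]
  abel

namespace IsLeviCivita

variable (hD : IsLeviCivita h D)
include hD

theorem torsionFree [NeZero (2 : K)] (hh : h.SeparatingLeft) (X Y : L) :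
    D X Y - D Y X = ⁅X, Y⁆ := by
  refine sub_eq_zero.mp (hh _ fun Z => (mul_eq_zero.mp ?_).resolve_left two_ne_zero)
  have hskew : h ⁅Y, X⁆ Z = -h ⁅X, Y⁆ Z := by rw [← lie_skew, map_neg, LinearMap.neg_apply]
  simp only [map_sub, LinearMap.sub_apply]
  linear_combination hD X Y Z - hD Y X Z - hskew

theorem metric_compatible [NeZero (2 : K)] (hh : ∀ X Y, h X Y = h Y X) (X Y Z : L) :
    h (D X Y) Z + h Y (D X Z) = 0 := by
  refine (mul_eq_zero.mp ?_).resolve_left two_ne_zero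
  have hskew : h X ⁅Z, Y⁆ = -h X ⁅Y, Z⁆ := by rw [← lie_skew, map_neg]
  linear_combination hD X Y Z + hD X Z Y - hskew + 2 * hh Y (D X Z) - hh Z ⁅X, Y⁆
    - hh Y ⁅X, Z⁆

theorem two_mul_metric_covariantDeriv_J (H : IsAlmostHermitian h ω J) (X Y Z : L) :
    2 * h (D X (J Y) - J (D X Y)) Z =
      cyclicBracketSum ω X (J Y) (J Z) - cyclicBracketSum ω X Y Z
        + ω X (nijenhuis J Y Z) := by
  have hJD : h (J (D X Y)) Z = -h (D X Y) (J Z) := by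
    rw [H.metric_J_left, H.metric_J_right, neg_neg]
  have hZX : ω ⁅J Z, X⁆ (J Y) = -h Y ⁅X, J Z⁆ := by
    rw [H.form_J_right, H.symm, ← lie_skew, map_neg]
  have hXZ : ω ⁅Z, X⁆ Y = h (J Y) ⁅X, Z⁆ := by
    rw [H.metric_J_left, ← lie_skew, map_neg, LinearMap.neg_apply, H.alt.neg]
  simp only [cyclicBracketSum, nijenhuis, map_sub, LinearMap.sub_apply]
  linear_combination hD X (J Y) Z + hD X Y (J Z) - 2 * hJD - H.form_J_right ⁅X, J Y⁆ Z - hZX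
    + H.metric_J_right ⁅X, Y⁆ Z + hXZ + H.alt.neg X ⁅J Y, J Z⁆ + H.form_J_right X ⁅J Y, Z⁆
    + H.form_J_right X ⁅Y, J Z⁆ - H.alt.neg X ⁅Y, Z⁆

theorem J_parallel_of_closed [NeZero (2 : K)] (H : IsAlmostHermitian h ω J)
    (hh : h.SeparatingLeft) (hcl : ∀ X Y Z, cyclicBracketSum ω X Y Z = 0)
    (hN : ∀ X Y, nijenhuis J X Y = 0) (X Y : L) :
    D X (J Y) = J (D X Y) := by
  refine sub_eq_zero.mp (hh _ fun Z => (mul_eq_zero.mp ?_).resolve_left two_ne_zero)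
  rw [hD.two_mul_metric_covariantDeriv_J H, hcl, hcl, hN, map_zero, sub_zero, add_zero]

end IsLeviCivita

theorem IsAlmostHermitian.form_add_form_of_J_parallel (H : IsAlmostHermitian h ω J)
    (hmet : ∀ X Y Z, h (D X Y) Z + h Y (D X Z) = 0) (hpar : ∀ X Y, D X (J Y) = J (D X Y))
    (X Y Z : L) : ω (D X Y) Z + ω Y (D X Z) = 0 := by
  rw [← H.metric_J_left, ← hpar, ← H.metric_J_left]
  linear_combination hmet X (J Y) Z

end LieAlgebra

theorem born_integrable_iff_subalgebras_and_J_parallel_general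
    (L : Type*) [LieRing L] [LieAlgebra ℝ L]
    (h ω : L →ₗ[ℝ] L →ₗ[ℝ] ℝ) (A J : L →ₗ[ℝ] L)
    (hh_symm : ∀ X Y, h X Y = h Y X)
    (hh_nondeg : ∀ X, (∀ Y, h X Y = 0) → X = 0)
    (hω_alt : ∀ X, ω X X = 0)
    (hJ : ∀ X Y, ω (J X) Y = - h X Y)
    (hJ2 : ∀ X, J (J X) = -X)
    (D : L →ₗ[ℝ] L →ₗ[ℝ] L)
    (hKoszul : ∀ X Y Z, 2 * h (D X Y) Z = h ⁅X, Y⁆ Z - h Y ⁅X, Z⁆ - h X ⁅Y, Z⁆) :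
    ((∀ X Y Z, ω ⁅X, Y⁆ Z + ω ⁅Y, Z⁆ X + ω ⁅Z, X⁆ Y = 0) ∧
     (∀ X Y, ⁅J X, J Y⁆ - J ⁅J X, Y⁆ - J ⁅X, J Y⁆ - ⁅X, Y⁆ = 0) ∧
     (∀ X Y, A X = X → A Y = Y → A ⁅X, Y⁆ = ⁅X, Y⁆) ∧
     (∀ X Y, A X = -X → A Y = -Y → A ⁅X, Y⁆ = -⁅X, Y⁆)) ↔
    ((∀ X Y, A X = X → A Y = Y → A ⁅X, Y⁆ = ⁅X, Y⁆) ∧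
     (∀ X Y, A X = -X → A Y = -Y → A ⁅X, Y⁆ = -⁅X, Y⁆) ∧
     (∀ X Y, D X (J Y) = J (D X Y))) := by
  have H : IsAlmostHermitian h ω J := ⟨hh_symm, hω_alt, hJ, hJ2⟩
  have hD : IsLeviCivita h D := hKoszul
  have htor := hD.torsionFree hh_nondeg
  constructor
  · rintro ⟨hclosed, hN, hsub_pos, hsub_neg⟩
    exact ⟨hsub_pos, hsub_neg, hD.J_parallel_of_closed H hh_nondeg hclosed hN⟩
  · rintro ⟨hsub_pos, hsub_neg, hpar⟩
    have hωpar := H.form_add_form_of_J_parallel (hD.metric_compatible hh_symm) hpar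
    exact ⟨cyclicBracketSum_eq_zero_of_torsionFree hω_alt htor hωpar,
      nijenhuis_eq_zero_of_torsionFree hJ2 htor hpar, hsub_pos, hsub_neg⟩

/-- A Born structure on a Lie algebra is integrable if and only if the `±1`-eigenspaces
of `A` are Lie subalgebras and `J` is parallel for the Levi-Civita connection of `h`. -/
theorem born_integrable_iff_subalgebras_and_J_parallel
    (L : Type*) [LieRing L] [LieAlgebra ℝ L] [FiniteDimensional ℝ L]
    (g h ω : L →ₗ[ℝ] L →ₗ[ℝ] ℝ) (A B J : L →ₗ[ℝ] L)
    (hg_symm : ∀ X Y, g X Y = g Y X)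
    (hg_nondeg : ∀ X, (∀ Y, g X Y = 0) → X = 0)
    (hh_symm : ∀ X Y, h X Y = h Y X)
    (hh_nondeg : ∀ X, (∀ Y, h X Y = 0) → X = 0)
    (hω_alt : ∀ X, ω X X = 0)
    (hω_nondeg : ∀ X, (∀ Y, ω X Y = 0) → X = 0)
    (hA : ∀ X Y, g (A X) Y = ω X Y)
    (hB : ∀ X Y, g (B X) Y = h X Y)
    (hJ : ∀ X Y, ω (J X) Y = - h X Y)
    (hA2 : ∀ X, A (A X) = X)
    (hB2 : ∀ X, B (B X) = X)
    (hJ2 : ∀ X, J (J X) = -X)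
    (D : L →ₗ[ℝ] L →ₗ[ℝ] L)
    (hKoszul : ∀ X Y Z, 2 * h (D X Y) Z = h ⁅X, Y⁆ Z - h Y ⁅X, Z⁆ - h X ⁅Y, Z⁆) :
    ((∀ X Y Z, ω ⁅X, Y⁆ Z + ω ⁅Y, Z⁆ X + ω ⁅Z, X⁆ Y = 0) ∧
     (∀ X Y, ⁅J X, J Y⁆ - J ⁅J X, Y⁆ - J ⁅X, J Y⁆ - ⁅X, Y⁆ = 0) ∧
     (∀ X Y, A X = X → A Y = Y → A ⁅X, Y⁆ = ⁅X, Y⁆) ∧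
     (∀ X Y, A X = -X → A Y = -Y → A ⁅X, Y⁆ = -⁅X, Y⁆)) ↔
    ((∀ X Y, A X = X → A Y = Y → A ⁅X, Y⁆ = ⁅X, Y⁆) ∧
     (∀ X Y, A X = -X → A Y = -Y → A ⁅X, Y⁆ = -⁅X, Y⁆) ∧
     (∀ X Y, D X (J Y) = J (D X Y))) :=
  born_integrable_iff_subalgebras_and_J_parallel_general L h ω A J hh_symm hh_nondeg hω_alt hJ hJ2 D
    hKoszul
end

section
/- Let 𝔤 be a finite-dimensional real Lie algebra with an integrable Born structure (g, h, ω, A, B, J) and let 𝔤₊, 𝔤₋ be the ±1-eigenspaces of A, so that 𝔤 = 𝔤₊ ⊕ 𝔤₋ as vector spaces; let pr₊ and pr₋ denote the corresponding projections. Define φ : 𝔤₋ → End(𝔤₊) by φ(X)Y := pr₊([X,Y]) and ρ : 𝔤₊ → End(𝔤₋) by ρ(Y)X := pr₋([Y,X]). Then φ and ρ are Lie algebra representations, i.e. φ([X,X']) = φ(X)∘φ(X') − φ(X')∘φ(X) for all X, X' ∈ 𝔤₋ and ρ([Y,Y']) = ρ(Y)∘ρ(Y') − ρ(Y')∘ρ(Y)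 for all Y, Y' ∈ 𝔤₊; moreover Q := J|_{𝔤₊} is a linear bijection from 𝔤₊ onto 𝔤₋ satisfying h(QX,QY) = h(X,Y) for all X, Y ∈ 𝔤₊. -/
/-- A Born structure on a real Lie algebra `L`: nondegenerate symmetric bilinear forms
`g`, `h`, a nondegenerate alternating bilinear form `ω`, and endomorphisms `A`, `B`, `J`
with `g(AX,Y) = ω(X,Y)`, `g(BX,Y) = h(X,Y)`, `ω(JX,Y) = −h(X,Y)`,
`A² = B² = Id` and `J² = −Id`. -/
def IsBornStructure {L : Type*} [LieRing L] [LieAlgebra ℝ L]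
    (g h ω : L →ₗ[ℝ] L →ₗ[ℝ] ℝ) (A B J : L →ₗ[ℝ] L) : Prop :=
  (∀ X Y, g X Y = g Y X) ∧ (∀ X, (∀ Y, g X Y = 0) → X = 0) ∧
  (∀ X Y, h X Y = h Y X) ∧ (∀ X, (∀ Y, h X Y = 0) → X = 0) ∧
  (∀ X, ω X X = 0) ∧ (∀ X, (∀ Y, ω X Y = 0) → X = 0) ∧
  (∀ X Y, g (A X) Y = ω X Y) ∧
  (∀ X Y, g (B X) Y = h X Y) ∧
  (∀ X Y, ω (J X) Y = - h X Y) ∧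
  (∀ X, A (A X) = X) ∧ (∀ X, B (B X) = X) ∧ (∀ X, J (J X) = -X)

/-- Integrability of a Born structure: `ω` is closed, the Nijenhuis tensor of `J`
vanishes, and the `±1`-eigenspaces of `A` are Lie subalgebras. -/
def IsIntegrableBornStructure {L : Type*} [LieRing L] [LieAlgebra ℝ L]
    (g h ω : L →ₗ[ℝ] L →ₗ[ℝ] ℝ) (A B J : L →ₗ[ℝ] L) : Prop :=
  IsBornStructure g h ω A B J ∧
  (∀ X Y Z, ω ⁅X, Y⁆ Z + ω ⁅Y, Z⁆ X + ω ⁅Z, X⁆ Y = 0) ∧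
  (∀ X Y, ⁅J X, J Y⁆ - J ⁅J X, Y⁆ - J ⁅X, J Y⁆ - ⁅X, Y⁆ = 0) ∧
  (∀ X Y, A X = X → A Y = Y → A ⁅X, Y⁆ = ⁅X, Y⁆) ∧
  (∀ X Y, A X = -X → A Y = -Y → A ⁅X, Y⁆ = -⁅X, Y⁆)

/-!
With `𝔤 = 𝔤₊ ⊕ 𝔤₋` and `𝔤₋` a subalgebra, `pr₊ [X, W] = pr₊ [X, pr₊ W]` for `X ∈ 𝔤₋`, so the
Jacobi identity `[[X, X'], Y] = [X, [X', Y]] - [X', [X, Y]]` survives projection to `𝔤₊`; the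
same argument with the roles of `𝔤₊` and `𝔤₋` exchanged handles `ρ`.
Nondegeneracy of `g` turns `g(AX,Y) = ω(X,Y)`, `g(BX,Y) = h(X,Y)`, `ω(JX,Y) = -h(X,Y)` into
`AJ = -B`, and with `A² = B² = 1`, `J² = -1` this forces `AJ = -JA`, so `J` swaps the two
eigenspaces of `A`. Finally `h(JX,JY) = ω(X,JY) = -ω(JY,X) = h(Y,X)`.
-/

section Module

variable {R V : Type*} [Ring R] [AddCommGroup V] [Module R V]

theorem proj_eq_zero_of_mem_compl {P M : Submodule R V} {p q : V →ₗ[R] V}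
    (hPM : Disjoint P M) (hp : ∀ x, p x ∈ P) (hq : ∀ x, q x ∈ M)
    (hpq : ∀ x, p x + q x = x) {x : V} (hx : x ∈ M) : p x = 0 := by
  refine Submodule.disjoint_def.mp hPM _ (hp x) ?_
  rw [eq_sub_of_add_eq (hpq x)]
  exact M.sub_mem hx (hq x)

variable (A : V →ₗ[R] V) {J : V →ₗ[R] V}

theorem mem_ker_sub_id_iff {x : V} : x ∈ LinearMap.ker (A - LinearMap.id) ↔ A x = x := by
  rw [LinearMap.mem_ker, LinearMap.sub_apply, LinearMap.id_apply, sub_eq_zero]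

theorem mem_ker_add_id_iff {x : V} : x ∈ LinearMap.ker (A + LinearMap.id) ↔ A x = -x := by
  rw [LinearMap.mem_ker, LinearMap.add_apply, LinearMap.id_apply, add_eq_zero_iff_eq_neg]

theorem disjoint_ker_sub_id_ker_add_id [IsAddTorsionFree V] :
    Disjoint (LinearMap.ker (A - LinearMap.id)) (LinearMap.ker (A + LinearMap.id)) := by
  refine Submodule.disjoint_def.mpr fun x hx hx' => ?_
  rw [mem_ker_sub_id_iff] at hx
  rw [mem_ker_add_id_iff, hx] at hx'
  exact self_eq_neg.mp hx'

variable {A}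

theorem injective_of_apply_apply_eq_neg (hJ : ∀ x, J (J x) = -x) : Function.Injective J :=
  fun x y hxy => neg_injective <| by rw [← hJ x, ← hJ y, hxy]

theorem map_ker_sub_id_of_anticomm (hJ : ∀ x, J (J x) = -x) (hAJ : ∀ x, A (J x) = -J (A x)) :
    Submodule.map J (LinearMap.ker (A - LinearMap.id)) = LinearMap.ker (A + LinearMap.id) := by
  ext z
  simp only [Submodule.mem_map, mem_ker_sub_id_iff, mem_ker_add_id_iff]
  constructor
  · rintro ⟨x, hx, rfl⟩
    rw [hAJ, hx]
  · intro hz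
    refine ⟨-J z, ?_, by rw [map_neg, hJ, neg_neg]⟩
    rw [map_neg, hAJ, hz, map_neg, neg_neg]

end Module

section Lie

variable {R L : Type*} [CommRing R] [LieRing L] [LieAlgebra R L]
  {P M : Submodule R L} {p q : L →ₗ[R] L}

theorem proj_lie_proj (hPM : Disjoint P M) (hM : ∀ x ∈ M, ∀ y ∈ M, ⁅x, y⁆ ∈ M)
    (hp : ∀ x, p x ∈ P) (hq : ∀ x, q x ∈ M) (hpq : ∀ x, p x + q x = x)
    {x : L} (hx : x ∈ M) (w : L) : p ⁅x, p w⁆ = p ⁅x, w⁆ := by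
  conv_rhs => rw [← hpq w, lie_add, map_add]
  rw [proj_eq_zero_of_mem_compl hPM hp hq hpq (hM x hx _ (hq w)), add_zero]

theorem proj_lie_lie (hPM : Disjoint P M) (hM : ∀ x ∈ M, ∀ y ∈ M, ⁅x, y⁆ ∈ M)
    (hp : ∀ x, p x ∈ P) (hq : ∀ x, q x ∈ M) (hpq : ∀ x, p x + q x = x)
    {x x' : L} (hx : x ∈ M) (hx' : x' ∈ M) (y : L) :
    p ⁅⁅x, x'⁆, y⁆ = p ⁅x, p ⁅x', y⁆⁆ - p ⁅x', p ⁅x, y⁆⁆ := by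
  rw [lie_lie, map_sub, proj_lie_proj hPM hM hp hq hpq hx, proj_lie_proj hPM hM hp hq hpq hx']

end Lie

namespace IsBornStructure

variable {L : Type*} [LieRing L] [LieAlgebra ℝ L] {g h ω : L →ₗ[ℝ] L →ₗ[ℝ] ℝ} {A B J : L →ₗ[ℝ] L}

theorem A_J_eq_neg_B (hB : IsBornStructure g h ω A B J) (x : L) : A (J x) = -B x := by
  obtain ⟨-, hg, -, -, -, -, hgA, hgB, hωJ, -⟩ := hB
  refine eq_neg_of_add_eq_zero_left (hg _ fun y => ?_)
  rw [map_add, LinearMap.add_apply, hgA, hgB, hωJ, neg_add_cancel]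

theorem J_J (hB : IsBornStructure g h ω A B J) (x : L) : J (J x) = -x :=
  hB.2.2.2.2.2.2.2.2.2.2.2 x

theorem A_J_eq_neg_J_A (hB : IsBornStructure g h ω A B J) (x : L) : A (J x) = -J (A x) := by
  obtain ⟨-, -, -, -, -, -, -, -, -, hAA, hBB, -⟩ := id hB
  have hJ : ∀ x, J x = -A (B x) := fun x => by rw [← hAA (J x), hB.A_J_eq_neg_B, map_neg]
  have hABAB : ∀ x, A (B (A (B x))) = -x := fun x => by
    simpa only [hJ, map_neg, neg_neg] using hB.J_J x
  rw [hB.A_J_eq_neg_B, hJ, neg_neg, ← hBB x, hABAB, hBB]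

theorem h_J_J (hB : IsBornStructure g h ω A B J) (x y : L) : h (J x) (J y) = h x y := by
  obtain ⟨-, -, hh, -, hω, -, -, -, hωJ, -, -, hJJ⟩ := hB
  have hωh : ∀ x y, ω x y = h (J x) y := fun x y => by
    rw [← neg_neg (h _ y), ← hωJ, hJJ, map_neg, LinearMap.neg_apply, neg_neg]
  rw [← hωh, ← LinearMap.IsAlt.neg hω, hωJ, neg_neg, hh]

end IsBornStructure

theorem born_is_bicross_product_general
    (L : Type*) [LieRing L] [LieAlgebra ℝ L]
    (g h ω : L →ₗ[ℝ] L →ₗ[ℝ] ℝ) (A B J : L →ₗ[ℝ] L)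
    (hBorn : IsIntegrableBornStructure g h ω A B J)
    (prP prM : L →ₗ[ℝ] L)
    (hprP : ∀ X, prP X ∈ LinearMap.ker (A - LinearMap.id))
    (hprM : ∀ X, prM X ∈ LinearMap.ker (A + LinearMap.id))
    (hpr : ∀ X, prP X + prM X = X) :
    (∀ X X' : L, X ∈ LinearMap.ker (A + LinearMap.id) →
      X' ∈ LinearMap.ker (A + LinearMap.id) →
      ∀ Y ∈ LinearMap.ker (A - LinearMap.id),
        prP ⁅⁅X, X'⁆, Y⁆ = prP ⁅X, prP ⁅X', Y⁆⁆ - prP ⁅X', prP ⁅X, Y⁆⁆) ∧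
    (∀ Y Y' : L, Y ∈ LinearMap.ker (A - LinearMap.id) →
      Y' ∈ LinearMap.ker (A - LinearMap.id) →
      ∀ X ∈ LinearMap.ker (A + LinearMap.id),
        prM ⁅⁅Y, Y'⁆, X⁆ = prM ⁅Y, prM ⁅Y', X⁆⁆ - prM ⁅Y', prM ⁅Y, X⁆⁆) ∧
    Set.InjOn J (LinearMap.ker (A - LinearMap.id)) ∧
    Submodule.map J (LinearMap.ker (A - LinearMap.id)) = LinearMap.ker (A + LinearMap.id) ∧
    (∀ X ∈ LinearMap.ker (A - LinearMap.id), ∀ Y ∈ LinearMap.ker (A - LinearMap.id),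
      h (J X) (J Y) = h X Y) := by
  obtain ⟨hB, -, -, hsubP, hsubM⟩ := hBorn
  have : IsAddTorsionFree L := .of_isTorsionFree ℝ L
  have hdisj := disjoint_ker_sub_id_ker_add_id A
  have hP : ∀ x ∈ LinearMap.ker (A - LinearMap.id), ∀ y ∈ LinearMap.ker (A - LinearMap.id),
      ⁅x, y⁆ ∈ LinearMap.ker (A - LinearMap.id) := fun x hx y hy => by
    rw [mem_ker_sub_id_iff] at *
    exact hsubP x y hx hy
  have hM : ∀ x ∈ LinearMap.ker (A + LinearMap.id), ∀ y ∈ LinearMap.ker (A + LinearMap.id),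
      ⁅x, y⁆ ∈ LinearMap.ker (A + LinearMap.id) := fun x hx y hy => by
    rw [mem_ker_add_id_iff] at *
    exact hsubM x y hx hy
  refine ⟨fun X X' hX hX' Y _ => proj_lie_lie hdisj hM hprP hprM hpr hX hX' Y,
    fun Y Y' hY hY' X _ => proj_lie_lie hdisj.symm hP hprM hprP
      (fun x => (add_comm _ _).trans (hpr x)) hY hY' X,
    (injective_of_apply_apply_eq_neg hB.J_J).injOn,
    map_ker_sub_id_of_anticomm hB.J_J hB.A_J_eq_neg_J_A,
    fun X _ Y _ => hB.h_J_J X Y⟩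

/-- Every Born Lie algebra is a bicross product: the maps `φ(X)Y = pr₊[X,Y]` and
`ρ(Y)X = pr₋[Y,X]` are Lie algebra representations and `Q = J|_{𝔤₊}` is a linear
isometric bijection from `𝔤₊` onto `𝔤₋`. -/
theorem born_is_bicross_product
    (L : Type*) [LieRing L] [LieAlgebra ℝ L] [FiniteDimensional ℝ L]
    (g h ω : L →ₗ[ℝ] L →ₗ[ℝ] ℝ) (A B J : L →ₗ[ℝ] L)
    (hBorn : IsIntegrableBornStructure g h ω A B J)
    (prP prM : L →ₗ[ℝ] L)
    (hprP : ∀ X, prP X ∈ LinearMap.ker (A - LinearMap.id))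
    (hprM : ∀ X, prM X ∈ LinearMap.ker (A + LinearMap.id))
    (hpr : ∀ X, prP X + prM X = X) :
    (∀ X X' : L, X ∈ LinearMap.ker (A + LinearMap.id) →
      X' ∈ LinearMap.ker (A + LinearMap.id) →
      ∀ Y ∈ LinearMap.ker (A - LinearMap.id),
        prP ⁅⁅X, X'⁆, Y⁆ = prP ⁅X, prP ⁅X', Y⁆⁆ - prP ⁅X', prP ⁅X, Y⁆⁆) ∧
    (∀ Y Y' : L, Y ∈ LinearMap.ker (A - LinearMap.id) →
      Y' ∈ LinearMap.ker (A - LinearMap.id) →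
      ∀ X ∈ LinearMap.ker (A + LinearMap.id),
        prM ⁅⁅Y, Y'⁆, X⁆ = prM ⁅Y, prM ⁅Y', X⁆⁆ - prM ⁅Y', prM ⁅Y, X⁆⁆) ∧
    Set.InjOn J (LinearMap.ker (A - LinearMap.id)) ∧
    Submodule.map J (LinearMap.ker (A - LinearMap.id)) = LinearMap.ker (A + LinearMap.id) ∧
    (∀ X ∈ LinearMap.ker (A - LinearMap.id), ∀ Y ∈ LinearMap.ker (A - LinearMap.id),
      h (J X) (J Y) = h X Y) :=
  born_is_bicross_product_general L g h ω A B J hBorn prP prM hprP hprM hpr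
end

section
/- Let 𝔤 be a finite-dimensional real Lie algebra which is the vector space direct sum of a Lie ideal 𝔤₊ and a Lie subalgebra 𝔤₋ (so [X₊,X₋] ∈ 𝔤₊ for X₊ ∈ 𝔤₊, X₋ ∈ 𝔤₋). Let h₋ be a nondegenerate symmetric bilinear form on 𝔤₋, Q : 𝔤₊ → 𝔤₋ a linear isomorphism, h₊(X,Y) := h₋(QX,QY), and let h be the form on 𝔤 restricting to h₊ on 𝔤₊, to h₋ on 𝔤₋, with h(𝔤₊,𝔤₋) = 0. Let J(X₊) = QX₊, J(X₋) = −Q⁻¹X₋, define φ(X₋)Y₊ := [X₋,Y₊] ∈ 𝔤₊, and let ∇, ∇⁻ be the Levi-Civita connections of h and h₋. Then ∇_X(JY) = J(∇_X Y) for all X, Y ∈ 𝔤 if and only if: (1) 𝔤₊ is abelian; (2) φ(X₋)ᵃ Y₊ = Q⁻¹(∇⁻_{X₋}(QY₊)) for all X₋ ∈ 𝔤₋, Y₊ ∈ 𝔤₊ (antisymmetric part with respect to h₊); (3) φ(QX₊)ˢ Y₊ = φ(QY₊)ˢ X₊ for all X₊, Y₊ ∈ 𝔤₊. -/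
/-!
By the Koszul formula, `∇J = 0` says that `N(X, Y, Z) = K(X, JY, Z) + K(X, Y, JZ)` vanishes,
where `K(X, Y, Z) = 2 h(∇_X Y, Z)`; indeed `N(X, Y, Z) = 2 h((∇_X J) Y, Z)`. Being trilinear, `N`
need only be tested on `𝔤₊ ∪ 𝔤₋`, and as `J` swaps the two summands with `J² = -1` and
`N(X, JY, JZ) = -N(X, Y, Z)`, only on `Y ∈ 𝔤₊`. Since `𝔤₊` is an ideal orthogonal to the
subalgebra `𝔤₋`, the Koszul form vanishes whenever exactly one argument lies in `𝔤₊`, and the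
four remaining cases are:
* `X, Y ∈ 𝔤₊`, `Z ∈ 𝔤₋`: `N` is the Koszul form of `h₊` on `𝔤₊`, which vanishes iff `𝔤₊` is
  abelian, as `K(X, Y, Z) - K(Y, X, Z) = 2 h([X, Y], Z)`;
* `X ∈ 𝔤₋`, `Y ∈ 𝔤₊`, `Z ∈ 𝔤₋`: comparing with the Koszul formula of `h₋` gives condition (2);
* `X, Y, Z ∈ 𝔤₊`: `N` vanishes iff `S(X; Y, Z) = 2 h(φ(QX)ˢ Y, Z)` is invariant under exchanging
  `X` and `Z`; as `S` is symmetric in `Y, Z`, this is condition (3);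
* `X ∈ 𝔤₋`, `Y, Z ∈ 𝔤₊`: `N = 0` identically.
-/

open LinearMap (BilinForm)

theorem forall_swap₁₃_iff_forall_swap₁₂ {α β : Sort*} {f : α → α → α → β}
    (hf : ∀ x y z, f x y z = f x z y) :
    (∀ x y z, f y x z = f z x y) ↔ ∀ x y z, f x y z = f y x z := by
  refine ⟨fun H x y z => ?_, fun H x y z => ?_⟩
  · rw [hf, H, hf]
  · rw [← H, hf, H]

section BlockDecomposition

variable {R V W : Type*} [CommRing R] [AddCommGroup V] [Module R V] [AddCommGroup W] [Module R W]
  {p q : Submodule R V}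

theorem LinearMap.eq_zero_of_isCompl (hpq : IsCompl p q) {f : V →ₗ[R] W}
    (hf : ∀ x ∈ (p : Set V) ∪ q, f x = 0) : f = 0 :=
  LinearMap.ext_on (by rw [Submodule.span_union, Submodule.span_eq, Submodule.span_eq,
    hpq.sup_eq_top]) fun x hx => hf x hx

theorem LinearMap.forall_eq_zero_iff_of_isCompl₂ (hpq : IsCompl p q) (B : V →ₗ[R] V →ₗ[R] W) :
    (∀ x y, B x y = 0) ↔ ∀ x ∈ (p : Set V) ∪ q, ∀ y ∈ (p : Set V) ∪ q, B x y = 0 := by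
  refine ⟨fun hB x _ y _ => hB x y, fun hB => ?_⟩
  have : B = 0 := eq_zero_of_isCompl hpq fun x hx => eq_zero_of_isCompl hpq (hB x hx)
  simp [this]

theorem LinearMap.forall_eq_zero_iff_of_isCompl₃ (hpq : IsCompl p q)
    (T : V →ₗ[R] V →ₗ[R] V →ₗ[R] W) :
    (∀ x y z, T x y z = 0) ↔
      ∀ x ∈ (p : Set V) ∪ q, ∀ y ∈ (p : Set V) ∪ q, ∀ z ∈ (p : Set V) ∪ q, T x y z = 0 := by
  refine ⟨fun hT x _ y _ z _ => hT x y z, fun hT => ?_⟩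
  have : T = 0 := eq_zero_of_isCompl hpq fun x hx =>
    eq_zero_of_isCompl hpq fun y hy => eq_zero_of_isCompl hpq (hT x hx y hy)
  simp [this]

theorem LinearMap.separatingLeft_of_isCompl {B : BilinForm R V} (hpq : IsCompl p q)
    (hpq_orth : ∀ x ∈ p, ∀ y ∈ q, B x y = 0) (hqp_orth : ∀ x ∈ q, ∀ y ∈ p, B x y = 0)
    (hp : (B.restrict p).SeparatingLeft) (hq : (B.restrict q).SeparatingLeft) :
    B.SeparatingLeft := by
  intro v hv
  obtain ⟨x, hx, y, hy, rfl⟩ := Submodule.mem_sup.1 (hpq.sup_eq_top ▸ Submodule.mem_top :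
    v ∈ p ⊔ q)
  have hx0 : (⟨x, hx⟩ : p) = 0 := hp _ fun z => by simpa [hqp_orth y hy z z.2] using hv z
  have hy0 : (⟨y, hy⟩ : q) = 0 := hq _ fun z => by simpa [hpq_orth x hx z z.2] using hv z
  simp only [Submodule.mk_eq_zero] at hx0 hy0
  rw [hx0, hy0, add_zero]

theorem LinearMap.separatingLeft_of_linearEquiv {B : BilinForm R V} {B' : BilinForm R W}
    (hB' : B'.SeparatingLeft) (e : V ≃ₗ[R] W) (hB : ∀ x y, B x y = B' (e x) (e y)) :
    B.SeparatingLeft := fun x hx =>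
  e.map_eq_zero_iff.1 <| hB' _ fun w => by simpa [hB] using hx (e.symm w)

end BlockDecomposition

section Koszul

variable {R L : Type*} [CommRing R] [LieRing L] [LieAlgebra R L] (h : BilinForm R L)

/-- The Levi-Civita connection satisfies `2 h(∇_X Y, Z) = koszul h X Y Z`. -/
def koszul (X Y Z : L) : R := h ⁅X, Y⁆ Z - h Y ⁅X, Z⁆ - h X ⁅Y, Z⁆

/-- `2 h((∇_X J) Y, Z)`, by the Koszul formula and the `h`-antisymmetry of `J`. -/
def koszulJ (J : Module.End R L) (X Y Z : L) : R := koszul h X (J Y) Z + koszul h X Y (J Z)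

/-- `2 h((ad a)ˢ Y, Z)`; for `a ∈ 𝔤₋` and `Y, Z ∈ 𝔤₊` this is `2 h₊(φ(a)ˢ Y, Z)`. -/
def adSymm (a Y Z : L) : R := h ⁅a, Y⁆ Z + h Y ⁅a, Z⁆

variable {h}

theorem koszul_sub_koszul_swap (X Y Z : L) :
    koszul h X Y Z - koszul h Y X Z = 2 * h ⁅X, Y⁆ Z := by
  simp only [koszul, ← lie_skew X Y, map_neg, LinearMap.neg_apply]; ring

theorem koszul_neg_right (X Y Z : L) : koszul h X Y (-Z) = -koszul h X Y Z := by
  simp only [koszul, lie_neg, map_neg]; ring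

theorem koszulJ_apply_apply {J : Module.End R L} {X Y Z : L} (hY : J (J Y) = -Y)
    (hZ : J (J Z) = -Z) : koszulJ h J X (J Y) (J Z) = -koszulJ h J X Y Z := by
  simp only [koszulJ, koszul, hY, hZ, lie_neg, neg_lie, map_neg, LinearMap.neg_apply]; ring

theorem koszul_coe {M : LieSubalgebra R L} {hM : BilinForm R M}
    (hMM : ∀ x y : M, h x y = hM x y) (a b c : M) : koszul h a b c = koszul hM a b c := by
  simp only [koszul, ← LieSubalgebra.coe_bracket, hMM]

variable {P M : LieSubalgebra R L}

theorem lie_mem_of_left_mem (hP : ∀ x : L, ∀ y ∈ P, ⁅x, y⁆ ∈ P) {x : L} (hx : x ∈ P) (y : L) :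
    ⁅x, y⁆ ∈ P := by
  rw [← lie_skew]; exact neg_mem (hP y x hx)

theorem koszul_eq_zero_of_mem (hP : ∀ x : L, ∀ y ∈ P, ⁅x, y⁆ ∈ P)
    (hPM : ∀ x ∈ P, ∀ y ∈ M, h x y = 0) (hMP : ∀ x ∈ M, ∀ y ∈ P, h x y = 0) {X Y Z : L}
    (hXYZ : X ∈ P ∧ Y ∈ M ∧ Z ∈ M ∨ X ∈ M ∧ Y ∈ P ∧ Z ∈ M ∨ X ∈ M ∧ Y ∈ M ∧ Z ∈ P) :
    koszul h X Y Z = 0 := by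
  rcases hXYZ with ⟨hX, hY, hZ⟩ | ⟨hX, hY, hZ⟩ | ⟨hX, hY, hZ⟩
  · rw [koszul, hPM _ (lie_mem_of_left_mem hP hX Y) _ hZ,
      hMP _ hY _ (lie_mem_of_left_mem hP hX Z), hPM _ hX _ (M.lie_mem hY hZ)]
    ring
  · rw [koszul, hPM _ (hP X Y hY) _ hZ, hPM _ hY _ (M.lie_mem hX hZ),
      hMP _ hX _ (lie_mem_of_left_mem hP hY Z)]
    ring
  · rw [koszul, hMP _ (M.lie_mem hX hY) _ hZ, hMP _ hY _ (hP X Z hZ), hMP _ hX _ (hP Y Z hZ)]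
    ring

theorem koszul_eq_neg_adSymm (hP : ∀ x : L, ∀ y ∈ P, ⁅x, y⁆ ∈ P)
    (hMP : ∀ x ∈ M, ∀ y ∈ P, h x y = 0) {A b C : L} (hA : A ∈ P) (hb : b ∈ M) :
    koszul h A b C = -adSymm h b A C := by
  rw [koszul, adSymm, hMP b hb _ (lie_mem_of_left_mem hP hA C), ← lie_skew b A, map_neg,
    LinearMap.neg_apply]
  ring

theorem koszul_eq_adSymm (hP : ∀ x : L, ∀ y ∈ P, ⁅x, y⁆ ∈ P)
    (hPM : ∀ x ∈ P, ∀ y ∈ M, h x y = 0) (hPsymm : ∀ x ∈ P, ∀ y ∈ P, h x y = h y x) {A B c : L}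
    (hA : A ∈ P) (hB : B ∈ P) (hc : c ∈ M) :
    koszul h A B c = adSymm h c A B := by
  rw [koszul, adSymm, hPM _ (hP A B hB) _ hc, ← lie_skew A c, ← lie_skew B c, map_neg, map_neg,
    hPsymm B hB _ (hP c A hA)]
  ring

theorem koszul_eq_of_mem_of_mem (hP : ∀ x : L, ∀ y ∈ P, ⁅x, y⁆ ∈ P)
    (hMP : ∀ x ∈ M, ∀ y ∈ P, h x y = 0) {a B C : L} (ha : a ∈ M) (hC : C ∈ P) :
    koszul h a B C = h ⁅a, B⁆ C - h B ⁅a, C⁆ := by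
  rw [koszul, hMP a ha _ (hP B C hC)]
  ring

theorem adSymm_comm (hP : ∀ x : L, ∀ y ∈ P, ⁅x, y⁆ ∈ P)
    (hPsymm : ∀ x ∈ P, ∀ y ∈ P, h x y = h y x) (a : L) {Y Z : L} (hY : Y ∈ P) (hZ : Z ∈ P) :
    adSymm h a Y Z = adSymm h a Z Y := by
  rw [adSymm, adSymm, hPsymm _ (hP a Y hY) Z hZ, hPsymm Y hY _ (hP a Z hZ), add_comm]

theorem forall_koszulJ_eq_zero_iff_of_mem_middle {J : Module.End R L}
    (hJP : ∀ x ∈ P, J x ∈ M) (hJM : ∀ x ∈ M, J x ∈ P)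
    (hJJ : ∀ x ∈ (P : Set L) ∪ M, J (J x) = -x) :
    (∀ X ∈ (P : Set L) ∪ M, ∀ Y ∈ (P : Set L) ∪ M, ∀ Z ∈ (P : Set L) ∪ M,
        koszulJ h J X Y Z = 0) ↔
      ∀ X ∈ (P : Set L) ∪ M, ∀ Y ∈ P, ∀ Z ∈ (P : Set L) ∪ M, koszulJ h J X Y Z = 0 := by
  refine ⟨fun H X hX Y hY Z hZ => H X hX Y (Or.inl hY) Z hZ, fun H X hX Y hY Z hZ => ?_⟩
  rcases hY with hY | hY
  · exact H X hX Y hY Z hZ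
  · have hJZ : J Z ∈ (P : Set L) ∪ M := hZ.symm.imp (hJM Z) (hJP Z)
    rw [← neg_eq_zero, ← koszulJ_apply_apply (hJJ Y (Or.inr hY)) (hJJ Z hZ)]
    exact H X hX (J Y) (hJM Y hY) (J Z) hJZ

theorem forall_koszulJ_eq_zero_iff (hP : ∀ x : L, ∀ y ∈ P, ⁅x, y⁆ ∈ P)
    (hPM : ∀ x ∈ P, ∀ y ∈ M, h x y = 0) (hMP : ∀ x ∈ M, ∀ y ∈ P, h x y = 0)
    (hPsymm : ∀ x ∈ P, ∀ y ∈ P, h x y = h y x) {J : Module.End R L}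
    (hJP : ∀ x ∈ P, J x ∈ M) (hJM : ∀ x ∈ M, J x ∈ P) (hJJ : ∀ x ∈ P, J (J x) = -x) :
    (∀ X ∈ (P : Set L) ∪ M, ∀ Y ∈ P, ∀ Z ∈ (P : Set L) ∪ M, koszulJ h J X Y Z = 0) ↔
      (∀ A B C : P, koszul h A B C = 0) ∧
      (∀ (a : M) (B : P) (c : M), koszulJ h J a B c = 0) ∧
      (∀ A B C : P, adSymm h (J B) A C = adSymm h (J C) A B) := by
  have hPPP : ∀ A ∈ P, ∀ B ∈ P, ∀ C ∈ P,
      koszulJ h J A B C = adSymm h (J C) A B - adSymm h (J B) A C := fun A hA B hB C hC => by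
    rw [koszulJ, koszul_eq_neg_adSymm hP hMP hA (hJP B hB),
      koszul_eq_adSymm hP hPM hPsymm hA hB (hJP C hC)]
    ring
  have hPPM : ∀ A ∈ P, ∀ B ∈ P, ∀ c ∈ M, koszulJ h J A B c = koszul h A B (J c) :=
    fun A hA B hB c hc => by
      rw [koszulJ, koszul_eq_zero_of_mem hP hPM hMP (Or.inl ⟨hA, hJP B hB, hc⟩), zero_add]
  have hMPP : ∀ a ∈ M, ∀ B ∈ P, ∀ C ∈ P, koszulJ h J a B C = 0 := fun a ha B hB C hC => by
    rw [koszulJ, koszul_eq_zero_of_mem hP hPM hMP (Or.inr (Or.inr ⟨ha, hJP B hB, hC⟩)),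
      koszul_eq_zero_of_mem hP hPM hMP (Or.inr (Or.inl ⟨ha, hB, hJP C hC⟩)), add_zero]
  constructor
  · intro H
    refine ⟨fun A B C => ?_, fun a B c => H a (Or.inr a.2) B B.2 c (Or.inr c.2), fun A B C => ?_⟩
    · have hc : -J C ∈ M := neg_mem (hJP C C.2)
      have := H A (Or.inl A.2) B B.2 (-J C) (Or.inr hc)
      rwa [hPPM A A.2 B B.2 _ hc, map_neg, hJJ C C.2, neg_neg] at this
    · have := H A (Or.inl A.2) B B.2 C (Or.inl C.2)
      rw [hPPP A A.2 B B.2 C C.2, sub_eq_zero] at this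
      exact this.symm
  · rintro ⟨h1, h2, h3⟩ X (hX | hX) Y hY Z (hZ | hZ)
    · rw [hPPP X hX Y hY Z hZ]
      exact sub_eq_zero.2 (h3 ⟨X, hX⟩ ⟨Y, hY⟩ ⟨Z, hZ⟩).symm
    · rw [hPPM X hX Y hY Z hZ]
      exact h1 ⟨X, hX⟩ ⟨Y, hY⟩ ⟨J Z, hJM Z hZ⟩
    · exact hMPP X hX Y hY Z hZ
    · exact h2 ⟨X, hX⟩ ⟨Y, hY⟩ ⟨Z, hZ⟩

end Koszul

section LeviCivita

variable {𝕜 L : Type*} [Field 𝕜] [NeZero (2 : 𝕜)] [LieRing L] [LieAlgebra 𝕜 L]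
  {h : BilinForm 𝕜 L} {P M : LieSubalgebra 𝕜 L}

theorem forall_commute_iff_forall_koszulJ (hnd : h.SeparatingLeft) {J : Module.End 𝕜 L}
    (hJ : ∀ v w, h (J v) w = -h v (J w)) {D : L →ₗ[𝕜] L →ₗ[𝕜] L}
    (hD : ∀ X Y Z, 2 * h (D X Y) Z = koszul h X Y Z)
    (hPM : IsCompl P.toSubmodule M.toSubmodule) :
    (∀ X Y, D X (J Y) = J (D X Y)) ↔
      ∀ X ∈ (P : Set L) ∪ M, ∀ Y ∈ (P : Set L) ∪ M, ∀ Z ∈ (P : Set L) ∪ M,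
        koszulJ h J X Y Z = 0 := by
  set T := (D.compl₂ J - D.compr₂ J).compr₂ h
  have hT : ∀ X Y Z, koszulJ h J X Y Z = 2 * T X Y Z := by
    intro X Y Z
    simp only [T, koszulJ, ← hD, LinearMap.compr₂_apply, LinearMap.sub_apply,
      LinearMap.compl₂_apply, map_sub, hJ, sub_neg_eq_add]
    ring
  have : (∀ X Y, D X (J Y) = J (D X Y)) ↔ ∀ X Y Z, T X Y Z = 0 := by
    refine forall₂_congr fun X Y => ⟨fun e Z => by simp [T, e], fun e => ?_⟩
    exact sub_eq_zero.1 (hnd _ fun Z => by simpa [T] using e Z)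
  rw [this, T.forall_eq_zero_iff_of_isCompl₃ hPM]
  simp [hT, two_ne_zero]

theorem forall_koszul_eq_zero_iff (hnd : (h.restrict P.toSubmodule).SeparatingLeft) :
    (∀ A B C : P, koszul h A B C = 0) ↔ ∀ A B : P, ⁅(A : L), (B : L)⁆ = 0 := by
  refine ⟨fun H A B => ?_, fun H A B C => by simp [koszul, H]⟩
  have : ⁅A, B⁆ = 0 := hnd _ fun C => by
    have := koszul_sub_koszul_swap (h := h) A B C
    rw [H, H, sub_zero, zero_eq_mul] at this
    simpa [two_ne_zero] using this
  simpa using congrArg Subtype.val this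

end LeviCivita

section BornStructure

variable {R L : Type*} [CommRing R] [LieRing L] [LieAlgebra R L] {h : BilinForm R L}
  {P M : LieSubalgebra R L} {hm : BilinForm R M} {Q : P ≃ₗ[R] M} {J : Module.End R L}

theorem apply_apply_eq_neg_of_mem (hJP : ∀ X : P, J X = Q X) (hJM : ∀ X : M, J X = -(Q.symm X : L))
    {x : L} (hx : x ∈ (P : Set L) ∪ M) : J (J x) = -x := by
  rcases hx with hx | hx
  · lift x to P using hx
    rw [hJP, hJM, Q.symm_apply_apply]
  · lift x to M using hx
    rw [hJM, map_neg, hJP, Q.apply_symm_apply]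

theorem apply_left_eq_neg_apply_right (hPM : IsCompl P.toSubmodule M.toSubmodule)
    (h_PP : ∀ X Y : P, h X Y = hm (Q X) (Q Y)) (h_MM : ∀ X Y : M, h X Y = hm X Y)
    (h_PM : ∀ (X : P) (Y : M), h X Y = 0) (h_MP : ∀ (X : M) (Y : P), h X Y = 0)
    (hJP : ∀ X : P, J X = Q X) (hJM : ∀ X : M, J X = -(Q.symm X : L)) (v w : L) :
    h (J v) w = -h v (J w) := by
  rw [eq_neg_iff_add_eq_zero]
  revert v w
  refine (LinearMap.forall_eq_zero_iff_of_isCompl₂ hPM (h ∘ₗ J + h.compl₂ J)).2 ?_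
  rintro x (hx | hx) y (hy | hy)
  · lift x to P using hx
    lift y to P using hy
    simp [hJP, h_PM, h_MP]
  · lift x to P using hx
    lift y to M using hy
    simp [hJP, hJM, h_PP, h_MM]
  · lift x to M using hx
    lift y to P using hy
    simp [hJP, hJM, h_PP, h_MM]
  · lift x to M using hx
    lift y to M using hy
    simp [hJM, h_PM, h_MP]

theorem forall_koszulJ_eq_zero_iff_of_subalgebra (hP : ∀ x : L, ∀ y ∈ P, ⁅x, y⁆ ∈ P)
    (hMP : ∀ x ∈ M, ∀ y ∈ P, h x y = 0)
    (h_PP : ∀ X Y : P, h X Y = hm (Q X) (Q Y)) (h_MM : ∀ X Y : M, h X Y = hm X Y)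
    (hJP : ∀ X : P, J X = Q X) (hJM : ∀ X : M, J X = -(Q.symm X : L))
    {Dm : M →ₗ[R] M →ₗ[R] M} (hDm : ∀ X Y Z, 2 * hm (Dm X Y) Z = koszul hm X Y Z) :
    (∀ (a : M) (B : P) (c : M), koszulJ h J a B c = 0) ↔
      ∀ (a : M) (B C : P), h ⁅(a : L), (B : L)⁆ C - h B ⁅(a : L), (C : L)⁆ =
        2 * h (Q.symm (Dm a (Q B)) : L) C := by
  have key : ∀ (a : M) (B C : P), koszulJ h J a B (Q C) =
      2 * h (Q.symm (Dm a (Q B)) : L) C - (h ⁅(a : L), (B : L)⁆ C - h B ⁅(a : L), (C : L)⁆) := by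
    intro a B C
    rw [koszulJ, hJP, hJM, Q.symm_apply_apply, koszul_neg_right, koszul_coe h_MM, ← hDm,
      koszul_eq_of_mem_of_mem hP hMP a.2 C.2, h_PP, Q.apply_symm_apply]
    ring
  refine ⟨fun H a B C => ?_, fun H a B c => ?_⟩
  · exact (sub_eq_zero.1 ((key a B C).symm.trans (H a B (Q C)))).symm
  · obtain ⟨C, rfl⟩ := Q.surjective c
    rw [key, H, sub_self]

end BornStructure

theorem semidirect_born_integrability_general
    (L : Type*) [LieRing L] [LieAlgebra ℝ L]
    (P M : LieSubalgebra ℝ L)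
    (hcompl : IsCompl P.toSubmodule M.toSubmodule)
    (hideal : ∀ (X : L) (Y : ↥P), ⁅X, (Y : L)⁆ ∈ P)
    (hm : (↥M) →ₗ[ℝ] (↥M) →ₗ[ℝ] ℝ)
    (hm_symm : ∀ X Y, hm X Y = hm Y X)
    (hm_nondeg : ∀ X, (∀ Y, hm X Y = 0) → X = 0)
    (Q : (↥P) ≃ₗ[ℝ] (↥M))
    (h : L →ₗ[ℝ] L →ₗ[ℝ] ℝ)
    (h_PP : ∀ X Y : ↥P, h (X : L) (Y : L) = hm (Q X) (Q Y))
    (h_MM : ∀ X Y : ↥M, h (X : L) (Y : L) = hm X Y)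
    (h_PM : ∀ (X : ↥P) (Y : ↥M), h (X : L) (Y : L) = 0)
    (h_MP : ∀ (X : ↥M) (Y : ↥P), h (X : L) (Y : L) = 0)
    (J : L →ₗ[ℝ] L)
    (hJP : ∀ X : ↥P, J (X : L) = ((Q X : ↥M) : L))
    (hJM : ∀ X : ↥M, J (X : L) = -((Q.symm X : ↥P) : L))
    (D : L →ₗ[ℝ] L →ₗ[ℝ] L)
    (hKoszul : ∀ X Y Z : L, 2 * h (D X Y) Z = h ⁅X, Y⁆ Z - h Y ⁅X, Z⁆ - h X ⁅Y, Z⁆)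
    (Dm : (↥M) →ₗ[ℝ] (↥M) →ₗ[ℝ] (↥M))
    (hKm : ∀ X Y Z : ↥M, 2 * hm (Dm X Y) Z = hm ⁅X, Y⁆ Z - hm Y ⁅X, Z⁆ - hm X ⁅Y, Z⁆) :
    (∀ X Y : L, D X (J Y) = J (D X Y)) ↔
    ((∀ X Y : ↥P, ⁅(X : L), (Y : L)⁆ = 0) ∧
     (∀ (X : ↥M) (Y Z : ↥P),
        h ⁅(X : L), (Y : L)⁆ (Z : L) - h (Y : L) ⁅(X : L), (Z : L)⁆
          = 2 * h ((Q.symm (Dm X (Q Y)) : ↥P) : L) (Z : L)) ∧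
     (∀ X Y Z : ↥P,
        h ⁅((Q X : ↥M) : L), (Y : L)⁆ (Z : L) + h (Y : L) ⁅((Q X : ↥M) : L), (Z : L)⁆
          = h ⁅((Q Y : ↥M) : L), (X : L)⁆ (Z : L)
            + h (X : L) ⁅((Q Y : ↥M) : L), (Z : L)⁆)) := by
  have hP : ∀ x : L, ∀ y ∈ P, ⁅x, y⁆ ∈ P := fun x y hy => hideal x ⟨y, hy⟩
  have hPM : ∀ x ∈ P, ∀ y ∈ M, h x y = 0 := fun x hx y hy => h_PM ⟨x, hx⟩ ⟨y, hy⟩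
  have hMP : ∀ x ∈ M, ∀ y ∈ P, h x y = 0 := fun x hx y hy => h_MP ⟨x, hx⟩ ⟨y, hy⟩
  have hPsymm : ∀ x ∈ P, ∀ y ∈ P, h x y = h y x := fun x hx y hy => by
    rw [h_PP ⟨x, hx⟩ ⟨y, hy⟩, h_PP ⟨y, hy⟩ ⟨x, hx⟩, hm_symm]
  have hPnd : (LinearMap.BilinForm.restrict h P.toSubmodule).SeparatingLeft :=
    LinearMap.separatingLeft_of_linearEquiv hm_nondeg Q h_PP
  have hMnd : (LinearMap.BilinForm.restrict h M.toSubmodule).SeparatingLeft :=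
    LinearMap.separatingLeft_of_linearEquiv hm_nondeg (LinearEquiv.refl ℝ M) h_MM
  have hJP' : ∀ x ∈ P, J x ∈ M := fun x hx => hJP ⟨x, hx⟩ ▸ (Q ⟨x, hx⟩).2
  have hJM' : ∀ x ∈ M, J x ∈ P := fun x hx => hJM ⟨x, hx⟩ ▸ neg_mem (Q.symm ⟨x, hx⟩).2
  have hJJ : ∀ x ∈ (P : Set L) ∪ M, J (J x) = -x := fun x => apply_apply_eq_neg_of_mem hJP hJM
  rw [forall_commute_iff_forall_koszulJ
      (LinearMap.separatingLeft_of_isCompl hcompl hPM hMP hPnd hMnd)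
      (apply_left_eq_neg_apply_right hcompl h_PP h_MM h_PM h_MP hJP hJM) hKoszul hcompl,
    forall_koszulJ_eq_zero_iff_of_mem_middle hJP' hJM' hJJ,
    forall_koszulJ_eq_zero_iff hP hPM hMP hPsymm hJP' hJM' (fun x hx => hJJ x (Or.inl hx)),
    forall_koszul_eq_zero_iff hPnd,
    forall_koszulJ_eq_zero_iff_of_subalgebra hP hMP h_PP h_MM hJP hJM hKm]
  simp only [hJP]
  exact and_congr_right' (and_congr_right'
    (forall_swap₁₃_iff_forall_swap₁₂ fun X Y Z => adSymm_comm hP hPsymm _ Y.2 Z.2))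

/-- Integrability criterion for the Born structure associated with semidirect product
data `(𝔤₊, 𝔤₋, h₋, Q, φ)`, where `𝔤₊` is an ideal and `φ(X₋)Y₊ = [X₋,Y₊]`. -/
theorem semidirect_born_integrability
    (L : Type*) [LieRing L] [LieAlgebra ℝ L] [FiniteDimensional ℝ L]
    (P M : LieSubalgebra ℝ L)
    (hcompl : IsCompl P.toSubmodule M.toSubmodule)
    (hideal : ∀ (X : L) (Y : ↥P), ⁅X, (Y : L)⁆ ∈ P)
    (hm : (↥M) →ₗ[ℝ] (↥M) →ₗ[ℝ] ℝ)
    (hm_symm : ∀ X Y, hm X Y = hm Y X)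
    (hm_nondeg : ∀ X, (∀ Y, hm X Y = 0) → X = 0)
    (Q : (↥P) ≃ₗ[ℝ] (↥M))
    (h : L →ₗ[ℝ] L →ₗ[ℝ] ℝ)
    (h_PP : ∀ X Y : ↥P, h (X : L) (Y : L) = hm (Q X) (Q Y))
    (h_MM : ∀ X Y : ↥M, h (X : L) (Y : L) = hm X Y)
    (h_PM : ∀ (X : ↥P) (Y : ↥M), h (X : L) (Y : L) = 0)
    (h_MP : ∀ (X : ↥M) (Y : ↥P), h (X : L) (Y : L) = 0)
    (J : L →ₗ[ℝ] L)
    (hJP : ∀ X : ↥P, J (X : L) = ((Q X : ↥M) : L))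
    (hJM : ∀ X : ↥M, J (X : L) = -((Q.symm X : ↥P) : L))
    (D : L →ₗ[ℝ] L →ₗ[ℝ] L)
    (hKoszul : ∀ X Y Z : L, 2 * h (D X Y) Z = h ⁅X, Y⁆ Z - h Y ⁅X, Z⁆ - h X ⁅Y, Z⁆)
    (Dm : (↥M) →ₗ[ℝ] (↥M) →ₗ[ℝ] (↥M))
    (hKm : ∀ X Y Z : ↥M, 2 * hm (Dm X Y) Z = hm ⁅X, Y⁆ Z - hm Y ⁅X, Z⁆ - hm X ⁅Y, Z⁆) :
    (∀ X Y : L, D X (J Y) = J (D X Y)) ↔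
    ((∀ X Y : ↥P, ⁅(X : L), (Y : L)⁆ = 0) ∧
     (∀ (X : ↥M) (Y Z : ↥P),
        h ⁅(X : L), (Y : L)⁆ (Z : L) - h (Y : L) ⁅(X : L), (Z : L)⁆
          = 2 * h ((Q.symm (Dm X (Q Y)) : ↥P) : L) (Z : L)) ∧
     (∀ X Y Z : ↥P,
        h ⁅((Q X : ↥M) : L), (Y : L)⁆ (Z : L) + h (Y : L) ⁅((Q X : ↥M) : L), (Z : L)⁆
          = h ⁅((Q Y : ↥M) : L), (X : L)⁆ (Z : L)
            + h (X : L) ⁅((Q Y : ↥M) : L), (Z : L)⁆)) :=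
  semidirect_born_integrability_general L P M hcompl hideal hm hm_symm hm_nondeg Q h h_PP h_MM h_PM
    h_MP J hJP hJM D hKoszul Dm hKm
end
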